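/- arXiv:1103.5290 — 2 statements merged into one kernel-verified Lean document; each statement's English description precedes it below -/
import Mathlib

section
/- At a transition slot the battery is empty: Suppose λ₁,...,λ_K ≥ 0, ν_k = (ln 2 Σ_{i=k}^K λᵢ)^{-1}, and the complementary slackness conditions λ_k (Σ_{i=1}^k Tᵢ − B₁ − Σ_{i=1}^{k-1} Hᵢ) = 0 hold for all k. If ν_t ≠ ν_{t+1} for some t < K, then Σ_{i=1}^t Tᵢ = B₁ + Σ_{i=1}^{t-1} Hᵢ. -/
/-! A change of water level between slots `t` and `t + 1` means the tail sums of the multipliers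
from `t` and from `t + 1` differ, so `λ_t ≠ 0`; complementary slackness then forces the `t`-th
energy constraint to be tight. -/

open Finset

lemma ne_zero_of_sum_Icc_ne_sum_Icc_add_one {M : Type*} [AddCommMonoid M] {f : ℕ → M}
    {a b : ℕ} (hab : a ≤ b) (h : ∑ i ∈ Icc a b, f i ≠ ∑ i ∈ Icc (a + 1) b, f i) :
    f a ≠ 0 := by
  intro ha
  apply h
  rw [← insert_Icc_add_one_left_eq_Icc hab, sum_insert (by simp), ha, zero_add]

theorem battery_empty_at_transition_general (K : ℕ) (lam T H : ℕ → ℝ) (B₁ : ℝ)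
    (hCS : ∀ k ∈ Finset.Icc 1 K,
      lam k * ((∑ i ∈ Finset.Icc 1 k, T i) - B₁ - ∑ i ∈ Finset.Icc 1 (k - 1), H i) = 0)
    (t : ℕ) (ht1 : 1 ≤ t) (htK : t < K)
    (hν : (Real.log 2 * ∑ i ∈ Finset.Icc t K, lam i)⁻¹ ≠
          (Real.log 2 * ∑ i ∈ Finset.Icc (t + 1) K, lam i)⁻¹) :
    ∑ i ∈ Finset.Icc 1 t, T i = B₁ + ∑ i ∈ Finset.Icc 1 (t - 1), H i := by
  have hsum_ne := ne_of_apply_ne (fun s ↦ (Real.log 2 * s)⁻¹) hν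
  have hlam_t : lam t ≠ 0 := ne_zero_of_sum_Icc_ne_sum_Icc_add_one htK.le hsum_ne
  have htight := (mul_eq_zero.mp (hCS t (mem_Icc.mpr ⟨ht1, htK.le⟩))).resolve_left hlam_t
  linarith

theorem battery_empty_at_transition (K : ℕ) (lam T H : ℕ → ℝ) (B₁ : ℝ)
    (hlam : ∀ k ∈ Finset.Icc 1 K, 0 ≤ lam k)
    (hCS : ∀ k ∈ Finset.Icc 1 K,
      lam k * ((∑ i ∈ Finset.Icc 1 k, T i) - B₁ - ∑ i ∈ Finset.Icc 1 (k - 1), H i) = 0)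
    (t : ℕ) (ht1 : 1 ≤ t) (htK : t < K)
    (hν : (Real.log 2 * ∑ i ∈ Finset.Icc t K, lam i)⁻¹ ≠
          (Real.log 2 * ∑ i ∈ Finset.Icc (t + 1) K, lam i)⁻¹) :
    ∑ i ∈ Finset.Icc 1 t, T i = B₁ + ∑ i ∈ Finset.Icc 1 (t - 1), H i :=
  battery_empty_at_transition_general K lam T H B₁ hCS t ht1 htK hν
end

section
/- Two-slot value concavity: for γ₁, γ₂ > 0 and H₁ ≥ 0, the function B₁ ↦ max_{0 ≤ T ≤ B₁} [log₂(1 + γ₁T) + log₂(1 + γ₂(B₁ − T + H₁))] is concave and non-decreasing on [0, ∞). -/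
open Set Real

lemma logb2_concave_ineq {x y a b : ℝ} (hx : 0 < x) (hy : 0 < y)
    (ha : 0 ≤ a) (hb : 0 ≤ b) (hab : a + b = 1) :
    a * Real.logb 2 x + b * Real.logb 2 y ≤ Real.logb 2 (a * x + b * y) := by
  have h := strictConcaveOn_log_Ioi.concaveOn.2 (mem_Ioi.2 hx) (mem_Ioi.2 hy) ha hb hab
  simp only [smul_eq_mul] at h
  have h2 : (0:ℝ) < Real.log 2 := Real.log_pos one_lt_two
  simp only [Real.logb]
  rw [show a * (Real.log x / Real.log 2) + b * (Real.log y / Real.log 2)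
      = (a * Real.log x + b * Real.log y) / Real.log 2 by ring]
  gcongr

theorem two_slot_value_concave (γ₁ γ₂ H₁ : ℝ)
    (hγ₁ : 0 < γ₁) (hγ₂ : 0 < γ₂) (hH₁ : 0 ≤ H₁) :
    ConcaveOn ℝ (Set.Ici (0 : ℝ))
      (fun B₁ => sSup ((fun T => Real.logb 2 (1 + γ₁ * T) +
          Real.logb 2 (1 + γ₂ * (B₁ - T + H₁))) '' Set.Icc 0 B₁)) ∧
    MonotoneOn
      (fun B₁ => sSup ((fun T => Real.logb 2 (1 + γ₁ * T) +
          Real.logb 2 (1 + γ₂ * (B₁ - T + H₁))) '' Set.Icc 0 B₁))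
      (Set.Ici (0 : ℝ)) := by
  have hcont : ∀ B : ℝ, 0 ≤ B → ContinuousOn
      (fun T => Real.logb 2 (1 + γ₁ * T) + Real.logb 2 (1 + γ₂ * (B - T + H₁)))
      (Set.Icc 0 B) := by
    intro B hB x hx
    have h1 : (0:ℝ) < 1 + γ₁ * x := by nlinarith [hx.1]
    have h2 : (0:ℝ) < 1 + γ₂ * (B - x + H₁) := by nlinarith [hx.2]
    have a1 : ContinuousAt (fun T : ℝ => 1 + γ₁ * T) x := by fun_prop
    have a2 : ContinuousAt (fun T : ℝ => 1 + γ₂ * (B - T + H₁)) x := by fun_prop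
    have c1 : ContinuousAt (fun T => Real.logb 2 (1 + γ₁ * T)) x :=
      ContinuousAt.comp (f := fun T : ℝ => 1 + γ₁ * T) (Real.continuousAt_logb h1.ne') a1
    have c2 : ContinuousAt (fun T => Real.logb 2 (1 + γ₂ * (B - T + H₁))) x :=
      ContinuousAt.comp (f := fun T : ℝ => 1 + γ₂ * (B - T + H₁)) (Real.continuousAt_logb h2.ne') a2
    exact (c1.add c2).continuousWithinAt
  have hatt : ∀ B : ℝ, 0 ≤ B → ∃ T ∈ Set.Icc 0 B,
      sSup ((fun T => Real.logb 2 (1 + γ₁ * T) +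
          Real.logb 2 (1 + γ₂ * (B - T + H₁))) '' Set.Icc 0 B)
        = Real.logb 2 (1 + γ₁ * T) + Real.logb 2 (1 + γ₂ * (B - T + H₁)) :=
    fun B hB => isCompact_Icc.exists_sSup_image_eq ⟨0, left_mem_Icc.2 hB⟩ (hcont B hB)
  have hbdd : ∀ B : ℝ, 0 ≤ B → BddAbove ((fun T => Real.logb 2 (1 + γ₁ * T) +
      Real.logb 2 (1 + γ₂ * (B - T + H₁))) '' Set.Icc 0 B) :=
    fun B hB => (isCompact_Icc.image_of_continuousOn (hcont B hB)).bddAbove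
  have hkey : ∀ a b B₁ B₂ T₁ T₂ : ℝ, 0 ≤ a → 0 ≤ b → a + b = 1 →
      T₁ ∈ Set.Icc 0 B₁ → T₂ ∈ Set.Icc 0 B₂ →
      a * (Real.logb 2 (1 + γ₁ * T₁) + Real.logb 2 (1 + γ₂ * (B₁ - T₁ + H₁)))
      + b * (Real.logb 2 (1 + γ₁ * T₂) + Real.logb 2 (1 + γ₂ * (B₂ - T₂ + H₁)))
      ≤ Real.logb 2 (1 + γ₁ * (a * T₁ + b * T₂))
        + Real.logb 2 (1 + γ₂ * ((a * B₁ + b * B₂) - (a * T₁ + b * T₂) + H₁)) := by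
    intro a b B₁ B₂ T₁ T₂ ha hb hab h1 h2
    have p1 : (0:ℝ) < 1 + γ₁ * T₁ := by nlinarith [h1.1]
    have p2 : (0:ℝ) < 1 + γ₁ * T₂ := by nlinarith [h2.1]
    have q1 : (0:ℝ) < 1 + γ₂ * (B₁ - T₁ + H₁) := by nlinarith [h1.2]
    have q2 : (0:ℝ) < 1 + γ₂ * (B₂ - T₂ + H₁) := by nlinarith [h2.2]
    have e1 : 1 + γ₁ * (a * T₁ + b * T₂) = a * (1 + γ₁ * T₁) + b * (1 + γ₁ * T₂) := by
      linear_combination -hab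
    have e2 : 1 + γ₂ * ((a * B₁ + b * B₂) - (a * T₁ + b * T₂) + H₁)
        = a * (1 + γ₂ * (B₁ - T₁ + H₁)) + b * (1 + γ₂ * (B₂ - T₂ + H₁)) := by
      linear_combination (-(1 + γ₂ * H₁)) * hab
    rw [e1, e2]
    have i1 := logb2_concave_ineq p1 p2 ha hb hab
    have i2 := logb2_concave_ineq q1 q2 ha hb hab
    linarith
  constructor
  · refine ⟨convex_Ici 0, ?_⟩
    intro x hx y hy a b ha hb hab
    simp only [smul_eq_mul]
    obtain ⟨T₁, hT₁, e₁⟩ := hatt x hx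
    obtain ⟨T₂, hT₂, e₂⟩ := hatt y hy
    have hx' : (0:ℝ) ≤ x := hx
    have hy' : (0:ℝ) ≤ y := hy
    have hBc : (0:ℝ) ≤ a * x + b * y := by positivity
    have hTmem : a * T₁ + b * T₂ ∈ Set.Icc 0 (a * x + b * y) := by
      constructor
      · exact add_nonneg (mul_nonneg ha hT₁.1) (mul_nonneg hb hT₂.1)
      · have := mul_le_mul_of_nonneg_left hT₁.2 ha
        have := mul_le_mul_of_nonneg_left hT₂.2 hb
        linarith
    have hle := le_csSup (hbdd _ hBc) (Set.mem_image_of_mem _ hTmem)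
    rw [e₁, e₂]
    exact le_trans (hkey a b x y T₁ T₂ ha hb hab hT₁ hT₂) hle
  · intro x hx y hy hxy
    obtain ⟨T, hT, e⟩ := hatt x hx
    show sSup ((fun T => Real.logb 2 (1 + γ₁ * T) +
          Real.logb 2 (1 + γ₂ * (x - T + H₁))) '' Set.Icc 0 x)
        ≤ sSup ((fun T => Real.logb 2 (1 + γ₁ * T) +
          Real.logb 2 (1 + γ₂ * (y - T + H₁))) '' Set.Icc 0 y)
    have hTmem : T ∈ Set.Icc 0 y := ⟨hT.1, hT.2.trans hxy⟩
    have hle := le_csSup (hbdd y (le_trans hx hxy)) (Set.mem_image_of_mem _ hTmem)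
    rw [e]
    refine le_trans ?_ hle
    have : 1 + γ₂ * (x - T + H₁) ≤ 1 + γ₂ * (y - T + H₁) := by nlinarith
    have hpos : (0:ℝ) < 1 + γ₂ * (x - T + H₁) := by nlinarith [hT.2]
    linarith [Real.logb_le_logb_of_le (b := 2) one_lt_two hpos this]
end
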